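/- arXiv:2401.05263 — 2 statements merged into one kernel-verified Lean document; each statement's English description precedes it below -/
import Mathlib

section
/- Let K be a compact subset of the space ℓ²↓ of nonincreasing square-summable sequences of nonnegative reals. Then the set A = {x ∈ ℓ²↓ : ∃ y ∈ K with x ⪯ y} is pre-compact in ℓ²↓, where x ⪯ y means the multiset of entries of x can be written as {y_{i,j}} with Σ_j y_{i,j} ≤ y_i for every i. -/
open scoped ENNReal NNReal

/-- `x ⪯ y`: the multiset of entries of `x` can be rewritten as `{Y i j}`
with `Σ_j Y i j ≤ y i` for every `i`. -/
def Precede (x y : ℕ → ℝ) : Prop :=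
  ∃ (Y : ℕ → ℕ → ℝ) (e : ℕ ≃ ℕ × ℕ),
    (∀ i j, 0 ≤ Y i j) ∧
    (∀ k, x k = Y (e k).1 (e k).2) ∧
    (∀ i, ∑' j, ENNReal.ofReal (Y i j) ≤ ENNReal.ofReal (y i))

/-- The cone `ℓ²↓` of nonnegative nonincreasing square-summable sequences,
viewed inside the Banach space `ℓ²`. -/
def ellTwoDown : Set (lp (fun _ : ℕ => ℝ) 2) :=
  {f | (∀ i, 0 ≤ f i) ∧ ∀ i j : ℕ, i ≤ j → f j ≤ f i}

noncomputable abbrev L2 := lp (fun _ : ℕ => ℝ) 2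


lemma summable_sq (f : L2) : Summable (fun k => ‖f k‖ ^ 2) := by
  have h := lp.memℓp f
  rw [memℓp_gen_iff (by norm_num : 0 < (2:ℝ≥0∞).toReal)] at h
  simpa [ENNReal.toReal_ofNat, Real.rpow_natCast] using h

lemma norm_sq_eq (f : L2) : ‖f‖ ^ 2 = ∑' k, ‖f k‖ ^ 2 := by
  have h := lp.norm_rpow_eq_tsum (by norm_num : 0 < (2:ℝ≥0∞).toReal) f
  simpa [ENNReal.toReal_ofNat, Real.rpow_natCast] using h

noncomputable def Tail (f : L2) (N : ℕ) : ℝ := ∑' k, ‖f (k + N)‖ ^ 2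

lemma summable_sq_add (f : L2) (N : ℕ) : Summable (fun k => ‖f (k + N)‖ ^ 2) :=
  (summable_nat_add_iff N).2 (summable_sq f)

lemma Tail_nonneg (f : L2) (N : ℕ) : 0 ≤ Tail f N :=
  tsum_nonneg fun _ => by positivity

lemma Tail_le_norm_sq (f : L2) (N : ℕ) : Tail f N ≤ ‖f‖ ^ 2 := by
  rw [norm_sq_eq, ← Summable.sum_add_tsum_nat_add N (summable_sq f)]
  have : 0 ≤ ∑ i ∈ Finset.range N, ‖f i‖ ^ 2 := Finset.sum_nonneg fun _ _ => by positivity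
  unfold Tail; linarith

lemma tendsto_Tail (f : L2) : Filter.Tendsto (Tail f) Filter.atTop (nhds 0) :=
  tendsto_sum_nat_add (fun k => ‖f k‖ ^ 2)

lemma Tail_le_close (f g : L2) (N : ℕ) : Tail f N ≤ 2 * ‖f - g‖ ^ 2 + 2 * Tail g N := by
  have h1 : Summable (fun k => ‖(f - g) (k + N)‖ ^ 2) := summable_sq_add (f - g) N
  have h2 := summable_sq_add g N
  have key : Tail f N ≤ ∑' k, (2 * ‖(f - g) (k + N)‖ ^ 2 + 2 * ‖g (k + N)‖ ^ 2) := by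
    refine Summable.tsum_le_tsum (fun k => ?_) (summable_sq_add f N) (by
      exact ((h1.mul_left 2).add (h2.mul_left 2)))
    have : (f - g) (k + N) = f (k + N) - g (k + N) := by
      simp [lp.coeFn_sub]
    rw [this]
    have := abs_nonneg (f (k+N)); have := abs_nonneg (g (k+N))
    simp only [Real.norm_eq_abs, sq_abs]
    nlinarith [sq_nonneg (f (k+N) - 2 * g (k+N))]
  rw [Summable.tsum_add (h1.mul_left 2) (h2.mul_left 2), tsum_mul_left, tsum_mul_left] at key
  have := Tail_le_norm_sq (f - g) N
  unfold Tail at *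
  linarith

lemma Tail_anti (f : L2) {N M : ℕ} (h : N ≤ M) : Tail f M ≤ Tail f N := by
  have hs := summable_sq_add f N
  have key := Summable.sum_add_tsum_nat_add (f := fun k => ‖f (k + N)‖ ^ 2) (M - N) hs
  have h1 : Tail f M = ∑' k, ‖f (k + (M - N) + N)‖ ^ 2 :=
    tsum_congr fun k => by rw [show k + (M - N) + N = k + M by omega]
  have h2 : 0 ≤ ∑ i ∈ Finset.range (M - N), ‖f (i + N)‖ ^ 2 :=
    Finset.sum_nonneg fun _ _ => by positivity
  simp only [Tail] at *
  linarith [key]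

lemma uniform_tail {K : Set L2} (hK : IsCompact K) {ε : ℝ} (hε : 0 < ε) :
    ∃ N : ℕ, ∀ y ∈ K, Tail y N ≤ ε := by
  obtain ⟨r, hr, hr2⟩ : ∃ r > 0, 2 * r ^ 2 ≤ ε / 2 := by
    refine ⟨Real.sqrt (ε / 4), Real.sqrt_pos.2 (by linarith), ?_⟩
    rw [Real.sq_sqrt (by linarith)]; linarith
  obtain ⟨t, htf, htsub⟩ := Metric.totallyBounded_iff.1 hK.totallyBounded r hr
  -- for each z in t pick N_z
  have hchoice : ∀ z : L2, ∃ N : ℕ, Tail z N ≤ ε / 4 := by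
    intro z
    have := (tendsto_Tail z).eventually (gt_mem_nhds (show (0:ℝ) < ε/4 by linarith))
    obtain ⟨N, hN⟩ := this.exists
    exact ⟨N, le_of_lt hN⟩
  choose Nz hNz using hchoice
  by_cases hte : t.Nonempty
  · obtain ⟨N, hN⟩ : ∃ N : ℕ, ∀ z ∈ t, Nz z ≤ N := by
      obtain ⟨N, hN⟩ := (htf.image Nz).bddAbove
      exact ⟨N, fun z hz => hN (Set.mem_image_of_mem _ hz)⟩
    refine ⟨N, fun y hy => ?_⟩
    obtain ⟨z, hzt, hyz⟩ := Set.mem_iUnion₂.1 (htsub hy)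
    have hmono : Tail z N ≤ Tail z (Nz z) := Tail_anti z (hN z hzt)
    have hdist : ‖y - z‖ < r := by
      rw [← dist_eq_norm]; exact Metric.mem_ball.1 hyz
    have := Tail_le_close y z N
    have h2 : 2 * ‖y - z‖ ^ 2 ≤ 2 * r ^ 2 := by nlinarith [norm_nonneg (y - z)]
    have := hNz z
    linarith [hmono, hNz z]
  · refine ⟨0, fun y hy => ?_⟩
    obtain ⟨z, hzt, _⟩ := Set.mem_iUnion₂.1 (htsub hy)
    exact absurd (⟨z, hzt⟩ : t.Nonempty) hte

lemma ofReal_Tail (f : L2) (hf0 : ∀ i, 0 ≤ f i) (N : ℕ) :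
    ENNReal.ofReal (Tail f N) = ∑' k, ENNReal.ofReal (f (k + N)) ^ 2 := by
  rw [Tail, ENNReal.ofReal_tsum_of_nonneg (fun k => by positivity) (summable_sq_add f N)]
  exact tsum_congr fun k => by
    rw [Real.norm_eq_abs, abs_of_nonneg (hf0 (k + N)), ← ENNReal.ofReal_pow (hf0 (k + N))]

lemma sq_tsum_le (a : ℕ → ℝ≥0∞) : ∑' j, a j ^ 2 ≤ (∑' j, a j) ^ 2 := by
  calc ∑' j, a j ^ 2 ≤ ∑' j, a j * (∑' i, a i) :=
        ENNReal.tsum_le_tsum fun j => by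
          rw [pow_two]; exact mul_le_mul_right (ENNReal.le_tsum j) _
    _ = (∑' j, a j) ^ 2 := by rw [ENNReal.tsum_mul_right, pow_two]

lemma precede_norm_le (f y : L2) (hf0 : ∀ i, 0 ≤ f i) (hy0 : ∀ i, 0 ≤ y i)
    (h : Precede (⇑f) (⇑y)) : ‖f‖ ≤ ‖y‖ := by
  obtain ⟨Y, e, hY0, hx, hle⟩ := h
  have key : ∑' k, ENNReal.ofReal (f k) ^ 2 ≤ ∑' i, ENNReal.ofReal (y i) ^ 2 := by
    calc ∑' k, ENNReal.ofReal (f k) ^ 2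
        = ∑' k, ENNReal.ofReal (Y (e k).1 (e k).2) ^ 2 := tsum_congr fun k => by rw [hx k]
      _ = ∑' p : ℕ × ℕ, ENNReal.ofReal (Y p.1 p.2) ^ 2 :=
          e.tsum_eq (fun p : ℕ × ℕ => ENNReal.ofReal (Y p.1 p.2) ^ 2)
      _ = ∑' i, ∑' j, ENNReal.ofReal (Y i j) ^ 2 := ENNReal.tsum_prod (f := fun i j => ENNReal.ofReal (Y i j) ^ 2)
      _ ≤ ∑' i, (∑' j, ENNReal.ofReal (Y i j)) ^ 2 :=
          ENNReal.tsum_le_tsum fun i => sq_tsum_le _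
      _ ≤ ∑' i, ENNReal.ofReal (y i) ^ 2 :=
          ENNReal.tsum_le_tsum fun i => pow_le_pow_left' (hle i) 2
  have cf : ∑' k, ENNReal.ofReal (f k) ^ 2 = ENNReal.ofReal (‖f‖ ^ 2) := by
    rw [norm_sq_eq f, ENNReal.ofReal_tsum_of_nonneg (fun k => by positivity) (summable_sq f)]
    exact tsum_congr fun k => by
      rw [Real.norm_eq_abs, abs_of_nonneg (hf0 k), ← ENNReal.ofReal_pow (hf0 k)]
  have cy : ∑' i, ENNReal.ofReal (y i) ^ 2 = ENNReal.ofReal (‖y‖ ^ 2) := by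
    rw [norm_sq_eq y, ENNReal.ofReal_tsum_of_nonneg (fun k => by positivity) (summable_sq y)]
    exact tsum_congr fun i => by
      rw [Real.norm_eq_abs, abs_of_nonneg (hy0 i), ← ENNReal.ofReal_pow (hy0 i)]
  rw [cf, cy] at key
  have h2 : ‖f‖ ^ 2 ≤ ‖y‖ ^ 2 :=
    (ENNReal.ofReal_le_ofReal_iff (by positivity)).1 key
  nlinarith [norm_nonneg f, norm_nonneg y]

set_option maxHeartbeats 1000000 in
lemma precede_tail (f y : L2) (hf0 : ∀ i, 0 ≤ f i) (hy0 : ∀ i, 0 ≤ y i)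
    (h : Precede (⇑f) (⇑y)) (N m : ℕ) (δ M : ℝ) (hδ : 0 ≤ δ) (hM : 0 ≤ M)
    (hyM : ∀ i, y i ≤ M) (hsmall : ∀ k, m ≤ k → f k ≤ δ) :
    Tail f m ≤ δ * N * M + Tail y N := by
  obtain ⟨Y, e, hY0, hx, hle⟩ := h
  set c : ℕ → ℝ≥0∞ := fun i => if i < N then ENNReal.ofReal δ else ENNReal.ofReal (y i) with hc
  set F : ℕ × ℕ → ℝ≥0∞ := fun p => c p.1 * ENNReal.ofReal (Y p.1 p.2) with hF
  have hYy : ∀ i j, ENNReal.ofReal (Y i j) ≤ ENNReal.ofReal (y i) := fun i j =>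
    le_trans (ENNReal.le_tsum j) (hle i)
  have step1 : ∀ k, m ≤ k → ENNReal.ofReal (f k) ^ 2 ≤ F (e k) := by
    intro k hk
    have hfY : ENNReal.ofReal (f k) = ENNReal.ofReal (Y (e k).1 (e k).2) := by rw [hx k]
    rw [pow_two, hF]
    dsimp only
    rw [← hfY]
    refine mul_le_mul_left ?_ _
    rw [hc]; dsimp only
    split
    · exact ENNReal.ofReal_le_ofReal (hsmall k hk)
    · rw [hfY]; exact hYy _ _
  have step2 : ENNReal.ofReal (Tail f m) ≤ ∑' p : ℕ × ℕ, F p := by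
    rw [ofReal_Tail f hf0 m]
    calc ∑' k, ENNReal.ofReal (f (k + m)) ^ 2 ≤ ∑' k, F (e (k + m)) :=
          ENNReal.tsum_le_tsum fun k => step1 (k + m) (Nat.le_add_left m k)
      _ ≤ ∑' p, F p := by
          exact ENNReal.tsum_comp_le_tsum_of_injective
            (e.injective.comp fun a b hab => by omega) F
  have step3 : ∑' p : ℕ × ℕ, F p ≤ ∑' i, c i * ENNReal.ofReal (y i) := by
    rw [hF, ENNReal.tsum_prod (f := fun i j => c i * ENNReal.ofReal (Y i j))]
    refine ENNReal.tsum_le_tsum fun i => ?_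
    rw [ENNReal.tsum_mul_left]
    exact mul_le_mul_right (hle i) _
  -- split the sum
  set g1 : ℕ → ℝ≥0∞ := fun i => if i < N then ENNReal.ofReal δ * ENNReal.ofReal (y i) else 0
  set g2 : ℕ → ℝ≥0∞ := fun i => if i < N then 0 else ENNReal.ofReal (y i) ^ 2
  have hsplit : ∀ i, c i * ENNReal.ofReal (y i) = g1 i + g2 i := by
    intro i
    simp only [hc, g1, g2]
    split <;> simp [pow_two]
  have step4 : ∑' i, c i * ENNReal.ofReal (y i) = (∑' i, g1 i) + ∑' i, g2 i := by
    rw [← ENNReal.tsum_add]; exact tsum_congr hsplit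
  have step5 : ∑' i, g1 i ≤ ENNReal.ofReal (δ * N * M) := by
    have : ∑' i, g1 i = ∑ i ∈ Finset.range N, g1 i :=
      tsum_eq_sum fun i hi => by simp [g1, Finset.mem_range.not.1 hi]
    rw [this]
    calc ∑ i ∈ Finset.range N, g1 i ≤ ∑ _i ∈ Finset.range N, ENNReal.ofReal (δ * M) := by
          refine Finset.sum_le_sum fun i hi => ?_
          simp only [g1, Finset.mem_range.1 hi, if_pos]
          rw [← ENNReal.ofReal_mul hδ]
          exact ENNReal.ofReal_le_ofReal (mul_le_mul_of_nonneg_left (hyM i) hδ)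
      _ = N * ENNReal.ofReal (δ * M) := by rw [Finset.sum_const, Finset.card_range, nsmul_eq_mul]
      _ = ENNReal.ofReal (δ * N * M) := by
          rw [← ENNReal.ofReal_natCast N, ← ENNReal.ofReal_mul (by positivity)]
          ring_nf
  have step6 : ∑' i, g2 i = ENNReal.ofReal (Tail y N) := by
    have h0 : ∑ i ∈ Finset.range N, g2 i = 0 :=
      Finset.sum_eq_zero fun i hi => by simp [g2, Finset.mem_range.1 hi]
    have hre : ∑' i, g2 i = ∑' b, g2 (b + N) := by
      refine tsum_eq_tsum_of_ne_zero_bij (fun x => x.1 + N) ?_ ?_ (fun x => rfl)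
      · intro a b hab
        simp only at hab
        exact Subtype.ext (Nat.add_right_cancel hab)
      · intro a ha
        have haN : N ≤ a := by
          by_contra hlt
          exact ha (by simp [g2, Nat.lt_of_not_le hlt])
        refine ⟨⟨a - N, ?_⟩, by simp [Nat.sub_add_cancel haN]⟩
        simpa [Function.mem_support, Nat.sub_add_cancel haN] using ha
    rw [hre, ofReal_Tail y hy0 N]
    exact tsum_congr fun b => by simp [g2, Nat.not_lt.2 (Nat.le_add_left N b)]
  have final : ENNReal.ofReal (Tail f m) ≤ ENNReal.ofReal (δ * N * M + Tail y N) := by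
    rw [ENNReal.ofReal_add (by positivity) (Tail_nonneg y N)]
    exact le_trans step2 (le_trans step3 (by rw [step4]; exact add_le_add step5 step6.le))
  have hnn : 0 ≤ δ * N * M + Tail y N := add_nonneg (by positivity) (Tail_nonneg y N)
  exact (ENNReal.ofReal_le_ofReal_iff hnn).1 final

lemma mul_sq_le (f : L2) (hf : f ∈ ellTwoDown) (k : ℕ) :
    (k + 1 : ℝ) * f k ^ 2 ≤ ‖f‖ ^ 2 := by
  obtain ⟨hf0, hmono⟩ := hf
  have h1 : ∀ j ∈ Finset.range (k + 1), f k ^ 2 ≤ ‖f j‖ ^ 2 := by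
    intro j hj
    have hj' : j ≤ k := Nat.lt_succ_iff.1 (Finset.mem_range.1 hj)
    have := hmono j k hj'
    rw [Real.norm_eq_abs, sq_abs]
    nlinarith [hf0 k, hf0 j]
  have h2 : (k + 1 : ℝ) * f k ^ 2 ≤ ∑ j ∈ Finset.range (k + 1), ‖f j‖ ^ 2 := by
    calc (k + 1 : ℝ) * f k ^ 2 = ∑ _j ∈ Finset.range (k + 1), f k ^ 2 := by
          rw [Finset.sum_const, Finset.card_range, nsmul_eq_mul]; push_cast; ring
      _ ≤ _ := Finset.sum_le_sum h1
  have h3 : ∑ j ∈ Finset.range (k + 1), ‖f j‖ ^ 2 ≤ ∑' j, ‖f j‖ ^ 2 :=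
    Summable.sum_le_tsum _ (fun _ _ => by positivity) (summable_sq f)
  rw [norm_sq_eq]; linarith

lemma A_tail {K : Set L2} (hKsub : K ⊆ ellTwoDown) (hK : IsCompact K) {ε : ℝ} (hε : 0 < ε) :
    ∃ m : ℕ, ∀ f ∈ {x | x ∈ ellTwoDown ∧ ∃ y ∈ K, Precede (⇑x) (⇑y)}, Tail f m ≤ ε := by
  -- bound for K
  obtain ⟨r, hr⟩ := hK.isBounded.subset_closedBall 0
  set M : ℝ := max r 1 with hM
  have hM1 : (1:ℝ) ≤ M := le_max_right r 1
  have hM0 : (0:ℝ) < M := lt_of_lt_of_le one_pos hM1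
  have hKM : ∀ y ∈ K, ‖y‖ ≤ M := fun y hy => by
    have := Metric.mem_closedBall.1 (hr hy)
    rw [dist_zero_right] at this
    exact le_trans this (le_max_left r 1)
  obtain ⟨N, hN⟩ := uniform_tail hK (by linarith : (0:ℝ) < ε / 2)
  set δ : ℝ := ε / (2 * (N * M + 1)) with hδdef
  have hNM0 : (0:ℝ) ≤ N * M := by positivity
  have hδ0 : 0 < δ := by
    apply div_pos hε; nlinarith
  obtain ⟨m, hm⟩ := exists_nat_ge (M ^ 2 / δ ^ 2)
  refine ⟨m, fun f hf => ?_⟩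
  obtain ⟨hfA, y, hyK, hpre⟩ := hf
  have hy0 := (hKsub hyK).1
  have hfM : ‖f‖ ≤ M := le_trans (precede_norm_le f y hfA.1 hy0 hpre) (hKM y hyK)
  have hyM : ∀ i, y i ≤ M := fun i =>
    le_trans (le_trans (le_abs_self _) (lp.norm_apply_le_norm (by norm_num) y i)) (hKM y hyK)
  have hsmall : ∀ k, m ≤ k → f k ≤ δ := by
    intro k hk
    have h1 := mul_sq_le f hfA k
    have h2 : ‖f‖ ^ 2 ≤ M ^ 2 := by nlinarith [norm_nonneg f]
    have h3 : M ^ 2 ≤ δ ^ 2 * m := by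
      rw [div_le_iff₀ (by positivity)] at hm; linarith [hm]
    have hkm : (m:ℝ) ≤ (k:ℝ) := Nat.cast_le.2 hk
    have h4 : δ ^ 2 * m ≤ δ ^ 2 * (k + 1) := by nlinarith
    have h5 : (k + 1 : ℝ) * f k ^ 2 ≤ δ ^ 2 * (k + 1) := by linarith
    have hk1 : (0:ℝ) < k + 1 := by positivity
    have h6 : f k ^ 2 ≤ δ ^ 2 := by
      have := mul_le_mul_of_nonneg_right h5 (le_of_lt (inv_pos.2 hk1))
      calc f k ^ 2 = (k + 1 : ℝ) * f k ^ 2 * (k+1:ℝ)⁻¹ := by field_simp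
        _ ≤ δ ^ 2 * (k + 1) * (k+1:ℝ)⁻¹ := this
        _ = δ ^ 2 := by field_simp
    nlinarith [hfA.1 k]
  have key := precede_tail f y hfA.1 hy0 hpre N m δ M (le_of_lt hδ0) (le_of_lt hM0) hyM hsmall
  have hδNM : δ * N * M ≤ ε / 2 := by
    rw [hδdef]
    rw [div_mul_eq_mul_div, div_mul_eq_mul_div, div_le_iff₀ (by nlinarith)]
    nlinarith
  linarith [hN y hyK, key]

lemma Tail_sub_le (f g : L2) (m : ℕ) : Tail (f - g) m ≤ 2 * Tail f m + 2 * Tail g m := by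
  have h1 := summable_sq_add f m
  have h2 := summable_sq_add g m
  have key : Tail (f - g) m ≤ ∑' k, (2 * ‖f (k + m)‖ ^ 2 + 2 * ‖g (k + m)‖ ^ 2) := by
    refine Summable.tsum_le_tsum (fun k => ?_) (summable_sq_add (f - g) m)
      ((h1.mul_left 2).add (h2.mul_left 2))
    have hsub : (f - g) (k + m) = f (k + m) - g (k + m) := by simp [lp.coeFn_sub]
    rw [hsub]
    simp only [Real.norm_eq_abs, sq_abs]
    nlinarith [sq_nonneg (f (k + m) + g (k + m))]
  rw [Summable.tsum_add (h1.mul_left 2) (h2.mul_left 2), tsum_mul_left, tsum_mul_left] at key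
  exact key

set_option maxHeartbeats 1000000 in
lemma A_totallyBounded {K : Set L2} (hKsub : K ⊆ ellTwoDown) (hK : IsCompact K) :
    TotallyBounded {x | x ∈ ellTwoDown ∧ ∃ y ∈ K, Precede (⇑x) (⇑y)} := by
  classical
  set A := {x | x ∈ ellTwoDown ∧ ∃ y ∈ K, Precede (⇑x) (⇑y)} with hA
  -- bound for K
  obtain ⟨rK, hrK⟩ := hK.isBounded.subset_closedBall 0
  set M : ℝ := max rK 1 with hM
  have hM0 : (0:ℝ) < M := lt_of_lt_of_le one_pos (le_max_right rK 1)
  have hKM : ∀ y ∈ K, ‖y‖ ≤ M := fun y hy => by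
    have := Metric.mem_closedBall.1 (hrK hy)
    rw [dist_zero_right] at this
    exact le_trans this (le_max_left rK 1)
  have hAM : ∀ f ∈ A, ‖f‖ ≤ M := by
    intro f hf
    obtain ⟨hfA, y, hyK, hpre⟩ := hf
    exact le_trans (precede_norm_le f y hfA.1 (hKsub hyK).1 hpre) (hKM y hyK)
  rw [Metric.totallyBounded_iff]
  intro ε hε
  -- tail control
  obtain ⟨m, hm⟩ := A_tail hKsub hK (show (0:ℝ) < (ε / 4) ^ 2 by positivity)
  -- finite-dimensional net
  set Φ : L2 → (Fin m → ℝ) := fun f k => f (k : ℕ) with hΦ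
  set r : ℝ := ε / (4 * (m + 1)) with hr
  have hr0 : 0 < r := by positivity
  have htb : TotallyBounded (Metric.closedBall (0 : Fin m → ℝ) M) :=
    (isCompact_closedBall _ _).totallyBounded
  obtain ⟨t₀, ht₀f, ht₀⟩ := Metric.totallyBounded_iff.1 htb r hr0
  have hrep : ∀ v : Fin m → ℝ, ∃ g : L2,
      (∃ f' ∈ A, Φ f' ∈ Metric.ball v r) → g ∈ A ∧ Φ g ∈ Metric.ball v r := by
    intro v
    by_cases h : ∃ f' ∈ A, Φ f' ∈ Metric.ball v r
    · obtain ⟨g, hg1, hg2⟩ := h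
      exact ⟨g, fun _ => ⟨hg1, hg2⟩⟩
    · exact ⟨0, fun hh => absurd hh h⟩
  choose rep hrep using hrep
  refine ⟨rep '' t₀, ht₀f.image rep, fun f hf => ?_⟩
  have hΦf : Φ f ∈ Metric.closedBall (0 : Fin m → ℝ) M := by
    rw [Metric.mem_closedBall, dist_zero_right]
    refine pi_norm_le_iff_of_nonneg (le_of_lt hM0) |>.2 fun k => ?_
    exact le_trans (lp.norm_apply_le_norm (by norm_num) f (k : ℕ)) (hAM f hf)
  obtain ⟨v, hvt, hv⟩ := Set.mem_iUnion₂.1 (ht₀ hΦf)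
  obtain ⟨hgA, hgv⟩ := hrep v ⟨f, hf, hv⟩
  set g := rep v with hg
  refine Set.mem_iUnion₂.2 ⟨g, Set.mem_image_of_mem rep hvt, ?_⟩
  rw [Metric.mem_ball, dist_eq_norm]
  -- compute the distance
  have hdistΦ : dist (Φ f) (Φ g) < 2 * r :=
    lt_of_le_of_lt (dist_triangle (Φ f) v (Φ g))
      (by
        rw [two_mul]
        exact add_lt_add (Metric.mem_ball.1 hv) (by rw [dist_comm]; exact Metric.mem_ball.1 hgv))
  have hhead : ∑ k ∈ Finset.range m, ‖(f - g) k‖ ^ 2 ≤ m * (2 * r) ^ 2 := by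
    have hterm : ∀ k ∈ Finset.range m, ‖(f - g) k‖ ^ 2 ≤ (2 * r) ^ 2 := by
      intro k hk
      have hkm := Finset.mem_range.1 hk
      have h1 : (f - g) k = (Φ f - Φ g) ⟨k, hkm⟩ := by simp [hΦ, lp.coeFn_sub]
      have h2 : ‖(Φ f - Φ g) ⟨k, hkm⟩‖ ≤ ‖Φ f - Φ g‖ := norm_le_pi_norm _ _
      have h3 : ‖Φ f - Φ g‖ < 2 * r := by simpa [dist_eq_norm] using hdistΦ
      rw [h1]
      have h4 : ‖(Φ f - Φ g) ⟨k, hkm⟩‖ ≤ 2 * r := le_of_lt (lt_of_le_of_lt h2 h3)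
      nlinarith [norm_nonneg ((Φ f - Φ g) ⟨k, hkm⟩)]
    calc ∑ k ∈ Finset.range m, ‖(f - g) k‖ ^ 2 ≤ ∑ _k ∈ Finset.range m, (2 * r) ^ 2 :=
          Finset.sum_le_sum hterm
      _ = m * (2 * r) ^ 2 := by rw [Finset.sum_const, Finset.card_range, nsmul_eq_mul]
  have htail : Tail (f - g) m ≤ 4 * (ε / 4) ^ 2 := by
    have := Tail_sub_le f g m
    have h1 := hm f hf
    have h2 := hm g hgA
    linarith
  have hnorm : ‖f - g‖ ^ 2 = ∑ k ∈ Finset.range m, ‖(f - g) k‖ ^ 2 + Tail (f - g) m := by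
    rw [norm_sq_eq, ← Summable.sum_add_tsum_nat_add m (summable_sq (f - g))]
    rfl
  have hmr : (m : ℝ) * (2 * r) ^ 2 ≤ ε ^ 2 / 4 := by
    rw [hr]
    have key : (m:ℝ) * (2 * (ε / (4 * ((m:ℝ) + 1)))) ^ 2
        = (m:ℝ) * ε ^ 2 / (4 * ((m:ℝ) + 1) ^ 2) := by
      field_simp; ring
    rw [key, div_le_div_iff₀ (by positivity) (by norm_num)]
    nlinarith [sq_nonneg ε, Nat.cast_nonneg (α := ℝ) m, sq_nonneg ((m:ℝ)),
      mul_nonneg (sq_nonneg ε) (sq_nonneg ((m:ℝ))), mul_nonneg (sq_nonneg ε) (Nat.cast_nonneg (α := ℝ) m)]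
  have hsq : ‖f - g‖ ^ 2 < ε ^ 2 := by
    have h4 : 4 * (ε / 4) ^ 2 = ε ^ 2 / 4 := by ring
    rw [hnorm]
    nlinarith
  nlinarith [norm_nonneg (f - g)]


/-- If `K ⊆ ℓ²↓` is compact then `A = {x : ∃ y ∈ K, x ⪯ y}` is pre-compact. -/
theorem stmt10 (K : Set (lp (fun _ : ℕ => ℝ) 2)) (hKsub : K ⊆ ellTwoDown)
    (hK : IsCompact K) :
    IsCompact (closure
      {x | x ∈ ellTwoDown ∧ ∃ y ∈ K, Precede (⇑x) (⇑y)}) :=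
  TotallyBounded.isCompact_of_isClosed
    (A_totallyBounded hKsub hK).closure isClosed_closure
end

section
/- Let f be a càdlàg function on [0,T] with no negative jumps that is 'good': the set Y(f) of right endpoints of excursion intervals of f has no isolated points, the complement of the union of excursion intervals in [0, sup Y(f)] has Lebesgue measure zero, and f does not attain a local minimum at any point of Y(f). Then f is continuous at every point r ∈ Y(f). -/
open MeasureTheory

/-- `(l, r)` is an excursion interval of `f` (on `[0, T]`): a nonempty interval
with `f(l−) = f(r−) = inf_{t ≤ r} f(t)` and `f(t) > inf_{s ≤ l} f(s)` on `(l,r)`. -/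
def ExcursionInterval (f : ℝ → ℝ) (T l r : ℝ) : Prop :=
  0 ≤ l ∧ l < r ∧ r ≤ T ∧
  Function.leftLim f l = sInf (f '' Set.Icc 0 r) ∧
  Function.leftLim f r = sInf (f '' Set.Icc 0 r) ∧
  ∀ t ∈ Set.Ioo l r, sInf (f '' Set.Icc 0 l) < f t

/-- The set `Y(f)` of right endpoints of excursion intervals of `f` on `[0,T]`. -/
def ExcEndpoints (f : ℝ → ℝ) (T : ℝ) : Set ℝ :=
  {r | ∃ l, ExcursionInterval f T l r}

/-- `f` is good on `[0,T]`: `Y(f)` has no isolated points, the complement of the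
union of the excursion intervals in `[0, sup Y(f)]` is Lebesgue null, and `f` has
no local minimum at any point of `Y(f)`. -/
def GoodOn (f : ℝ → ℝ) (T : ℝ) : Prop :=
  (∀ r ∈ ExcEndpoints f T, r ∈ closure (ExcEndpoints f T \ {r})) ∧
  volume (Set.Icc 0 (sSup (ExcEndpoints f T)) \
    ⋃ (l : ℝ) (r : ℝ) (_ : ExcursionInterval f T l r), Set.Ioo l r) = 0 ∧
  ∀ r ∈ ExcEndpoints f T, ¬ IsLocalMin f r

/-!
Suppose `f(r−) < f(r)` at the right end of an excursion interval `(l, r)`. The running infimum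
`m = inf_{[0,w]} f` equals `f(r−)` for all `w ∈ [l, r]`, and `f(a) > m` at every endpoint
`a ∈ Y(f) ∩ (l, r]`. By right continuity `f` stays above `m` just after `a`, whereas the left
limit at an endpoint is the running infimum there, at most `m`: so `a` is isolated from the right
in `Y(f)`. As `Y(f)` has no isolated points, `Y(f) ∩ (l, r]` accumulates at each of its points
from the left, and conversely each left limit `x ∈ (l, r]` of endpoints has `f(x−) = m`, making
`(l, x)` an excursion interval. The closure of `Y(f) ∩ (l, r]` is then a nonempty perfect set
each of whose points is isolated from one side; but such points are only countably many.
-/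

open Set Filter Function Topology

theorem Perfect.not_countable {α : Type*} [MetricSpace α] [CompleteSpace α] {C : Set α}
    (hC : Perfect C) (hne : C.Nonempty) : ¬ C.Countable := fun hcount => by
  obtain ⟨g, hgC, -, hginj⟩ := hC.exists_nat_bool_injection hne
  have hunc : ¬ Countable (ℕ → Bool) := by
    rw [← Cardinal.mk_le_aleph0_iff, not_le]
    simpa using Cardinal.aleph0_lt_continuum
  exact hunc <| countable_univ_iff.1 <|
    MapsTo.countable_of_injOn (fun x _ => hgC (mem_range_self x)) hginj.injOn hcount

theorem frequently_mem_of_frequently_mem_closure {α : Type*} [TopologicalSpace α]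
    {s U : Set α} {x : α} (hU : IsOpen U) (h : ∃ᶠ y in 𝓝[U] x, y ∈ closure s) :
    ∃ᶠ y in 𝓝[U] x, y ∈ s := by
  rw [frequently_iff_neBot, ofPred_mem_eq, ← nhdsWithin_inter',
    ← mem_closure_iff_nhdsWithin_neBot] at h ⊢
  exact closure_minimal hU.inter_closure isClosed_closure h

theorem nhdsWithin_inter_eq_bot_iff {α : Type*} [TopologicalSpace α] {s t : Set α} {x : α} :
    𝓝[s ∩ t] x = ⊥ ↔ ∀ᶠ y in 𝓝[t] x, y ∉ s := by
  rw [inter_comm, nhdsWithin_inter', inf_principal_eq_bot]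
  rfl

theorem frequently_nhdsLT_of_mem_closure_diff {α : Type*} [TopologicalSpace α] [LinearOrder α]
    {s : Set α} {x : α} (hx : x ∈ closure (s \ {x})) (hgap : ∀ᶠ y in 𝓝[>] x, y ∉ s) :
    ∃ᶠ y in 𝓝[<] x, y ∈ s := by
  rw [mem_closure_ne_iff_frequently_within, ← nhdsLT_sup_nhdsGT, frequently_sup] at hx
  exact hx.resolve_right (not_frequently.2 hgap)

theorem Real.eq_empty_of_isolated_right_of_closed_left {s : Set ℝ}
    (hright : ∀ x ∈ s, ∀ᶠ y in 𝓝[>] x, y ∉ s)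
    (hleft : ∀ x ∈ s, ∃ᶠ y in 𝓝[<] x, y ∈ s)
    (hclosed : ∀ x, (∃ᶠ y in 𝓝[<] x, y ∈ s) → x ∈ s) : s = ∅ := by
  by_contra hne
  have hperf : Perfect (closure s) := by
    refine Preperfect.perfect_closure fun x hx => accPt_iff_frequently.2 ?_
    refine ((hleft x hx).and_eventually self_mem_nhdsWithin).filter_mono nhdsWithin_le_nhds
      |>.mono fun y hy => ⟨hy.2.ne, hy.1⟩
  have hcount : (closure s).Countable := by
    refine ((countable_setOfPred_isolated_right_within (s := closure s)).union
      (countable_setOfPred_isolated_left_within (s := closure s))).mono fun x hx => ?_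
    by_cases h : ∃ᶠ y in 𝓝[<] x, y ∈ closure s
    · refine Or.inl ⟨hx, nhdsWithin_inter_eq_bot_iff.2 <| not_frequently.1 fun h' => ?_⟩
      have hxs := hclosed x (frequently_mem_of_frequently_mem_closure isOpen_Iio h)
      exact not_frequently.2 (hright x hxs) (frequently_mem_of_frequently_mem_closure isOpen_Ioi h')
    · exact Or.inr ⟨hx, nhdsWithin_inter_eq_bot_iff.2 (not_frequently.1 h)⟩
  exact hperf.not_countable (closure_nonempty_iff.2 (nonempty_iff_ne_empty.2 hne)) hcount

section Cadlag

variable {f : ℝ → ℝ}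

theorem continuousAt_of_leftLim_eq {x : ℝ} (hright : ContinuousWithinAt f (Ici x) x)
    (hleft : Tendsto f (𝓝[<] x) (𝓝 (leftLim f x))) (h : leftLim f x = f x) :
    ContinuousAt f x :=
  continuousAt_iff_continuous_left_right.2
    ⟨continuousWithinAt_Iio_iff_Iic.1 (h ▸ hleft : Tendsto f (𝓝[<] x) (𝓝 (f x))),
      hright⟩

theorem bddBelow_image_of_isCompact (hright : ∀ x, ContinuousWithinAt f (Ici x) x)
    (hleft : ∀ x, Tendsto f (𝓝[<] x) (𝓝 (leftLim f x))) {s : Set ℝ} (hs : IsCompact s) :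
    BddBelow (f '' s) := by
  refine hs.induction_on (by simp) (fun s t hst h => h.mono (image_mono hst))
    (fun s t hs ht => by simpa only [image_union] using hs.union ht) fun x _ => ?_
  have hb : ∀ᶠ y in 𝓝 x, min (f x) (leftLim f x) - 1 < f y := by
    rw [← nhdsLT_sup_nhdsGE, eventually_sup]
    exact ⟨(hleft x).eventually <| eventually_gt_nhds <|
        (sub_one_lt _).trans_le (min_le_right _ _),
      (hright x).eventually <| eventually_gt_nhds <| (sub_one_lt _).trans_le (min_le_left _ _)⟩
  exact ⟨_, nhdsWithin_le_nhds hb, _, forall_mem_image.2 fun y hy => hy.le⟩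

theorem leftLim_le_of_frequently (hleft : ∀ x, Tendsto f (𝓝[<] x) (𝓝 (leftLim f x)))
    {x c : ℝ} (h : ∃ᶠ z in 𝓝[<] x, leftLim f z ≤ c) : leftLim f x ≤ c := by
  by_contra! hc
  obtain ⟨c', hcc', hc'⟩ := exists_between hc
  obtain ⟨u, hu, hsub⟩ :=
    mem_nhdsLT_iff_exists_Ioo_subset.1 ((hleft x).eventually (eventually_gt_nhds hc'))
  obtain ⟨z, hzc, hz⟩ := (h.and_eventually (Ioo_mem_nhdsLT hu)).exists
  have : c' ≤ leftLim f z := ge_of_tendsto (hleft z) <| by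
    filter_upwards [Ioo_mem_nhdsLT hz.1] with t ht using (hsub ⟨ht.1, ht.2.trans hz.2⟩).le
  linarith

end Cadlag

section Excursions

variable {f : ℝ → ℝ} {T l r : ℝ}

theorem sInf_image_Icc_zero_anti (hbdd : ∀ b, BddBelow (f '' Icc 0 b)) {a b : ℝ} (ha : 0 ≤ a)
    (hab : a ≤ b) : sInf (f '' Icc 0 b) ≤ sInf (f '' Icc 0 a) :=
  csInf_le_csInf (hbdd b) ((nonempty_Icc.2 ha).image f) (image_mono (Icc_subset_Icc_right hab))

namespace ExcursionInterval

theorem leftLim_right (h : ExcursionInterval f T l r) : leftLim f r = sInf (f '' Icc 0 r) :=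
  h.2.2.2.2.1

theorem sInf_image_Icc_eq (h : ExcursionInterval f T l r) (hbdd : ∀ b, BddBelow (f '' Icc 0 b))
    (hr : Tendsto f (𝓝[<] r) (𝓝 (leftLim f r))) {w : ℝ} (hw : w ∈ Icc l r) :
    sInf (f '' Icc 0 w) = sInf (f '' Icc 0 r) := by
  obtain ⟨h0l, hlr, -, -, hLr, hpos⟩ := h
  refine le_antisymm ?_ (sInf_image_Icc_zero_anti hbdd (h0l.trans hw.1) hw.2)
  calc sInf (f '' Icc 0 w) ≤ sInf (f '' Icc 0 l) := sInf_image_Icc_zero_anti hbdd h0l hw.1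
    _ ≤ leftLim f r := ge_of_tendsto hr <| by
        filter_upwards [Ioo_mem_nhdsLT hlr] with t ht using (hpos t ht).le
    _ = sInf (f '' Icc 0 r) := hLr

theorem lt_of_mem_Ioo (h : ExcursionInterval f T l r) (hbdd : ∀ b, BddBelow (f '' Icc 0 b))
    (hr : Tendsto f (𝓝[<] r) (𝓝 (leftLim f r))) {t : ℝ} (ht : t ∈ Ioo l r) :
    sInf (f '' Icc 0 r) < f t := by
  rw [← h.sInf_image_Icc_eq hbdd hr ⟨le_rfl, h.2.1.le⟩]
  exact h.2.2.2.2.2 t ht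

theorem of_leftLim_eq (h : ExcursionInterval f T l r) (hbdd : ∀ b, BddBelow (f '' Icc 0 b))
    (hr : Tendsto f (𝓝[<] r) (𝓝 (leftLim f r))) {w : ℝ} (hw : w ∈ Ioc l r)
    (hLw : leftLim f w = sInf (f '' Icc 0 r)) : ExcursionInterval f T l w := by
  have hinf := h.sInf_image_Icc_eq hbdd hr (Ioc_subset_Icc_self hw)
  obtain ⟨h0l, -, hrT, hLl, -, hpos⟩ := h
  exact ⟨h0l, hw.1, hw.2.trans hrT, hinf ▸ hLl, hinf ▸ hLw,
    fun t ht => hpos t ⟨ht.1, ht.2.trans_le hw.2⟩⟩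

end ExcursionInterval

theorem eventually_nhdsGT_notMem_excEndpoints
    (hleft : ∀ x, Tendsto f (𝓝[<] x) (𝓝 (leftLim f x)))
    (hbdd : ∀ b, BddBelow (f '' Icc 0 b))
    {z : ℝ} (hz : ContinuousWithinAt f (Ici z) z) (hz0 : 0 ≤ z)
    (hjump : sInf (f '' Icc 0 z) < f z) : ∀ᶠ y in 𝓝[>] z, y ∉ ExcEndpoints f T := by
  obtain ⟨c, hc, hcz⟩ := exists_between hjump
  obtain ⟨u, hu, hsub⟩ :=
    mem_nhdsGE_iff_exists_Ico_subset.1 (hz.eventually (eventually_gt_nhds hcz))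
  filter_upwards [Ioo_mem_nhdsGT hu] with y hy ⟨l, hl⟩
  have hLy : leftLim f y < c := calc
    leftLim f y = sInf (f '' Icc 0 y) := hl.leftLim_right
    _ ≤ sInf (f '' Icc 0 z) := sInf_image_Icc_zero_anti hbdd hz0 hy.1.le
    _ < c := hc
  refine hLy.not_ge (ge_of_tendsto (hleft y) ?_)
  filter_upwards [Ioo_mem_nhdsLT hy.1] with t ht using (hsub ⟨ht.1.le, ht.2.trans hy.2⟩).le

theorem ExcursionInterval.apply_right_le_leftLim (hright : ∀ x, ContinuousWithinAt f (Ici x) x)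
    (hleft : ∀ x, Tendsto f (𝓝[<] x) (𝓝 (leftLim f x)))
    (hbdd : ∀ b, BddBelow (f '' Icc 0 b))
    (hiso : ∀ y ∈ ExcEndpoints f T, y ∈ closure (ExcEndpoints f T \ {y}))
    (h : ExcursionInterval f T l r) : f r ≤ leftLim f r := by
  by_contra! hjump
  set Y := ExcEndpoints f T
  have hinf : ∀ w ∈ Icc l r, sInf (f '' Icc 0 w) = sInf (f '' Icc 0 r) :=
    fun w hw => h.sInf_image_Icc_eq hbdd (hleft r) hw
  have hLY : ∀ y ∈ Y, leftLim f y = sInf (f '' Icc 0 y) := fun y ⟨_, hy⟩ => hy.leftLim_right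
  have hgap : ∀ a ∈ Y ∩ Ioc l r, ∀ᶠ y in 𝓝[>] a, y ∉ Y := by
    rintro a ⟨-, hla, har⟩
    refine eventually_nhdsGT_notMem_excEndpoints hleft hbdd (hright a) (h.1.trans hla.le) ?_
    rw [hinf a ⟨hla.le, har⟩]
    rcases har.lt_or_eq with har | rfl
    · exact h.lt_of_mem_Ioo hbdd (hleft r) ⟨hla, har⟩
    · exact h.leftLim_right ▸ hjump
  suffices Y ∩ Ioc l r = ∅ from this.subset ⟨⟨l, h⟩, h.2.1, le_rfl⟩
  refine Real.eq_empty_of_isolated_right_of_closed_left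
    (fun a ha => (hgap a ha).mono fun y hy hy' => hy hy'.1) ?_ ?_
  · rintro a ⟨haY, hla, har⟩
    have hacc := frequently_nhdsLT_of_mem_closure_diff (hiso a haY) (hgap a ⟨haY, hla, har⟩)
    exact (hacc.and_eventually (Ioo_mem_nhdsLT hla)).mono fun y hy =>
      ⟨hy.1, hy.2.1, hy.2.2.le.trans har⟩
  · intro x hx
    obtain ⟨y, ⟨-, hly, -⟩, hyx⟩ := (hx.and_eventually self_mem_nhdsWithin).exists
    have hxr : x ≤ r := not_lt.1 fun hrx =>
      (hx.and_eventually (Ioo_mem_nhdsLT hrx)).exists.elim fun z hz => hz.1.2.2.not_gt hz.2.1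
    refine ⟨⟨l, h.of_leftLim_eq hbdd (hleft r) ⟨hly.trans hyx, hxr⟩ (le_antisymm ?_ ?_)⟩,
      hly.trans hyx, hxr⟩
    · refine leftLim_le_of_frequently hleft (hx.mono fun z hz => ?_)
      rw [hLY z hz.1, hinf z ⟨hz.2.1.le, hz.2.2⟩]
    · refine ge_of_tendsto (hleft x) ?_
      filter_upwards [Ioo_mem_nhdsLT (hly.trans hyx)] with t ht
      exact (h.lt_of_mem_Ioo hbdd (hleft r) ⟨ht.1, ht.2.trans_le hxr⟩).le

end Excursions

/-- A good càdlàg function without negative jumps is continuous at every right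
endpoint of an excursion interval. -/
theorem stmt13 (f : ℝ → ℝ) (T : ℝ)
    (hright : ∀ x : ℝ, ContinuousWithinAt f (Set.Ici x) x)
    (hleft : ∀ x : ℝ, Filter.Tendsto f (nhdsWithin x (Set.Iio x))
      (nhds (Function.leftLim f x)))
    (hnonegjump : ∀ t : ℝ, Function.leftLim f t ≤ f t)
    (hgood : GoodOn f T) :
    ∀ r ∈ ExcEndpoints f T, ContinuousAt f r := by
  rintro r ⟨l, hl⟩
  have hbdd : ∀ b, BddBelow (f '' Icc 0 b) := fun b =>
    bddBelow_image_of_isCompact hright hleft isCompact_Icc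
  exact continuousAt_of_leftLim_eq (hright r) (hleft r) <| le_antisymm (hnonegjump r)
    (hl.apply_right_le_leftLim hright hleft hbdd hgood.1)
end
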